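/- Let n ≥ 1 be an integer and let u : EuclideanSpace ℝ (Fin n) → ℝ be a smooth harmonic function (the Laplacian of u vanishes at every point). If the function x ↦ ‖Du(x)‖, where Du(x) is the total derivative of u at x, is square-integrable with respect to the Lebesgue (volume) measure, then Du ≡ 0, i.e. u is constant. -/

import Mathlib

set_option maxHeartbeats 1000000
open MeasureTheory Set Real Filter ContinuousLinearMap
open scoped ContDiff RealInnerProductSpace Topology

/-- The derivative of `Real.smoothTransition` is globally bounded. -/
lemma deriv_smoothTransition_bound :
    ∃ M : ℝ, 0 ≤ M ∧ ∀ t : ℝ, |deriv Real.smoothTransition t| ≤ M := by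
  set D := deriv Real.smoothTransition with hD
  have hcont : Continuous D :=
    (Real.smoothTransition.contDiff (n := 1)).continuous_deriv le_rfl
  obtain ⟨tm, htm, hmax⟩ :=
    (isCompact_Icc (a := (0:ℝ)) (b := 1)).exists_isMaxOn (nonempty_Icc.2 zero_le_one)
      (continuous_abs.comp hcont).continuousOn
  refine ⟨|D tm|, abs_nonneg _, fun t => ?_⟩
  rcases le_or_gt t 0 with ht | ht
  · rcases eq_or_lt_of_le ht with rfl | ht'
    · exact hmax (by simp : (0:ℝ) ∈ Icc (0:ℝ) 1)
    · have h0 : D t = 0 := by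
        have hev : Real.smoothTransition =ᶠ[nhds t] (fun _ => 0) := by
          filter_upwards [Iio_mem_nhds ht'] with s hs
          exact Real.smoothTransition.zero_of_nonpos (le_of_lt hs)
        rw [hD, hev.deriv_eq, deriv_const]
      rw [h0, abs_zero]; exact abs_nonneg _
  rcases le_or_gt t 1 with ht1 | ht1
  · exact hmax ⟨ht.le, ht1⟩
  · have h0 : D t = 0 := by
      have hev : Real.smoothTransition =ᶠ[nhds t] (fun _ => 1) := by
        filter_upwards [Ioi_mem_nhds ht1] with s hs
        exact Real.smoothTransition.one_of_one_le (le_of_lt hs)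
      rw [hD, hev.deriv_eq, deriv_const]
    rw [h0, abs_zero]; exact abs_nonneg _

/-- The cutoff profile: `1` on `(-∞, 1]`, `0` on `[2, ∞)`. -/
noncomputable def cutP (t : ℝ) : ℝ := Real.smoothTransition (2 - t)

lemma cutP_contDiff : ContDiff ℝ ∞ cutP :=
  (Real.smoothTransition.contDiff (n := (⊤ : ℕ∞))).comp (contDiff_const.sub contDiff_id)

lemma cutP_one {t : ℝ} (ht : t ≤ 1) : cutP t = 1 :=
  Real.smoothTransition.one_of_one_le (by linarith)

lemma cutP_zero {t : ℝ} (ht : 2 ≤ t) : cutP t = 0 :=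
  Real.smoothTransition.zero_of_nonpos (by linarith)

lemma cutP_nonneg (t : ℝ) : 0 ≤ cutP t := Real.smoothTransition.nonneg _

lemma cutP_le_one (t : ℝ) : cutP t ≤ 1 := Real.smoothTransition.le_one _

lemma deriv_cutP (t : ℝ) : deriv cutP t = -deriv Real.smoothTransition (2 - t) := by
  have : deriv (fun s : ℝ => Real.smoothTransition (2 - s)) t
      = -deriv Real.smoothTransition (2 - t) := by
    simpa using deriv_comp_const_sub Real.smoothTransition 2 t
  exact this

lemma deriv_cutP_zero {t : ℝ} (ht : 2 < t) : deriv cutP t = 0 := by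
  have hev : cutP =ᶠ[nhds t] (fun _ => 0) := by
    filter_upwards [Ioi_mem_nhds ht] with s hs
    exact cutP_zero (le_of_lt hs)
  rw [hev.deriv_eq, deriv_const]

lemma cutP_deriv_bound : ∃ M : ℝ, 0 ≤ M ∧ ∀ t : ℝ, |deriv cutP t| ≤ M := by
  obtain ⟨M, hM0, hM⟩ := deriv_smoothTransition_bound
  exact ⟨M, hM0, fun t => by rw [deriv_cutP, abs_neg]; exact hM _⟩

variable {n : ℕ}

variable {n : ℕ}


noncomputable def eta (R : ℝ) (x : EuclideanSpace ℝ (Fin n)) : ℝ := cutP (‖x‖ ^ 2 / R ^ 2)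

lemma eta_contDiff {R : ℝ} : ContDiff ℝ ∞ (eta (n := n) R) :=
  cutP_contDiff.comp ((contDiff_norm_sq ℝ).div_const _)

lemma eta_hasFDerivAt {R : ℝ} (x : EuclideanSpace ℝ (Fin n)) :
    HasFDerivAt (eta R)
      ((deriv cutP (‖x‖ ^ 2 / R ^ 2)) • ((R ^ 2)⁻¹ • (2 • (innerSL ℝ x)))) x := by
  have h1 : HasFDerivAt (fun y : EuclideanSpace ℝ (Fin n) => ‖y‖ ^ 2 / R ^ 2)
      ((R ^ 2)⁻¹ • (2 • (innerSL ℝ x))) x := by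
    have := (hasStrictFDerivAt_norm_sq x).hasFDerivAt.const_smul (R ^ 2)⁻¹
    exact this.congr_of_eventuallyEq (Filter.Eventually.of_forall fun y => by simp [div_eq_inv_mul])
  have h2 : HasDerivAt cutP (deriv cutP (‖x‖ ^ 2 / R ^ 2)) (‖x‖ ^ 2 / R ^ 2) :=
    ((cutP_contDiff.differentiable (by norm_num)) _).hasDerivAt
  exact h2.comp_hasFDerivAt x h1

lemma eta_fderiv_apply {R : ℝ} (x v : EuclideanSpace ℝ (Fin n)) :
    fderiv ℝ (eta R) x v = deriv cutP (‖x‖ ^ 2 / R ^ 2) * (2 * ⟪x, v⟫ / R ^ 2) := by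
  rw [(eta_hasFDerivAt x).fderiv]
  simp only [ContinuousLinearMap.coe_smul', Pi.smul_apply, ContinuousLinearMap.smul_apply,
    innerSL_apply_apply, smul_eq_mul]
  ring

lemma eta_one {R : ℝ} (hR : 0 < R) {x : EuclideanSpace ℝ (Fin n)} (hx : ‖x‖ ≤ R) : eta R x = 1 := by
  apply cutP_one
  rw [div_le_one (by positivity)]
  exact pow_le_pow_left₀ (norm_nonneg _) hx 2

lemma eta_zero {R : ℝ} (hR : 0 < R) {x : EuclideanSpace ℝ (Fin n)} (hx : 2 * R ≤ ‖x‖) : eta R x = 0 := by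
  apply cutP_zero
  rw [le_div_iff₀ (by positivity)]
  nlinarith [norm_nonneg x]

lemma eta_nonneg {R : ℝ} (x : EuclideanSpace ℝ (Fin n)) : 0 ≤ eta R x := cutP_nonneg _
lemma eta_le_one {R : ℝ} (x : EuclideanSpace ℝ (Fin n)) : eta R x ≤ 1 := cutP_le_one _

lemma eta_hasCompactSupport {R : ℝ} (hR : 0 < R) : HasCompactSupport (eta (n := n) R) := by
  apply HasCompactSupport.intro (isCompact_closedBall (0 : EuclideanSpace ℝ (Fin n)) (2 * R))
  intro x hx
  simp only [Metric.mem_closedBall, dist_zero_right, not_le] at hx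
  exact eta_zero hR hx.le

lemma sum_sq_coords (x : EuclideanSpace ℝ (Fin n)) : ∑ i, ⟪x, EuclideanSpace.basisFun (Fin n) ℝ i⟫ ^ 2 = ‖x‖ ^ 2 := by
  have h := (EuclideanSpace.basisFun (Fin n) ℝ).sum_inner_mul_inner x x
  rw [real_inner_self_eq_norm_sq] at h
  rw [← h]
  apply Finset.sum_congr rfl
  intro i _
  rw [sq]
  nth_rewrite 2 [real_inner_comm]
  rfl

lemma eta_grad_sq_bound {R M : ℝ} (hR : 0 < R) (hM0 : 0 ≤ M)
    (hM : ∀ t, |deriv cutP t| ≤ M) (x : EuclideanSpace ℝ (Fin n)) :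
    ∑ i, (fderiv ℝ (eta R) x (EuclideanSpace.basisFun (Fin n) ℝ i)) ^ 2 ≤ 8 * M ^ 2 / R ^ 2 := by
  set c := deriv cutP (‖x‖ ^ 2 / R ^ 2) with hc
  have hform : ∑ i, (fderiv ℝ (eta R) x (EuclideanSpace.basisFun (Fin n) ℝ i)) ^ 2
      = c ^ 2 * (4 / R ^ 4) * ‖x‖ ^ 2 := by
    calc ∑ i, (fderiv ℝ (eta R) x (EuclideanSpace.basisFun (Fin n) ℝ i)) ^ 2
        = ∑ i, (c * (2 * ⟪x, EuclideanSpace.basisFun (Fin n) ℝ i⟫ / R ^ 2)) ^ 2 := by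
          exact Finset.sum_congr rfl fun i _ => by rw [eta_fderiv_apply, ← hc]
      _ = c ^ 2 * (4 / R ^ 4) * ∑ i, ⟪x, EuclideanSpace.basisFun (Fin n) ℝ i⟫ ^ 2 := by
          rw [Finset.mul_sum]
          exact Finset.sum_congr rfl fun i _ => by ring
      _ = c ^ 2 * (4 / R ^ 4) * ‖x‖ ^ 2 := by rw [sum_sq_coords]
  rw [hform]
  rcases le_or_gt (‖x‖ ^ 2) (2 * R ^ 2) with hc | hc
  · have h1 : c ^ 2 ≤ M ^ 2 := by
      rcases abs_le.mp (hM (‖x‖ ^ 2 / R ^ 2)) with ⟨hl, hr⟩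
      exact sq_le_sq' hl hr
    calc c ^ 2 * (4 / R ^ 4) * ‖x‖ ^ 2
        ≤ M ^ 2 * (4 / R ^ 4) * (2 * R ^ 2) := by
          apply mul_le_mul (mul_le_mul_of_nonneg_right h1 (by positivity)) hc (by positivity)
          positivity
      _ = 8 * M ^ 2 / R ^ 2 := by field_simp; ring
  · have hz : c = 0 := by
      apply deriv_cutP_zero
      rw [lt_div_iff₀ (by positivity)]
      linarith
    rw [hz]
    simp only [ne_eq, OfNat.ofNat_ne_zero, not_false_eq_true, zero_pow, zero_mul]
    positivity

lemma abs_coord_le {k : ℕ} (x : EuclideanSpace ℝ (Fin k)) (j : Fin k) : |x j| ≤ ‖x‖ := by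
  rw [EuclideanSpace.norm_eq, ← Real.sqrt_sq_eq_abs]
  apply Real.sqrt_le_sqrt
  simpa [sq_abs] using
    Finset.single_le_sum (f := fun i => |x i| ^ 2) (fun i _ => sq_nonneg _) (Finset.mem_univ j)

lemma divergence_integral_zero {m : ℕ}
    (F : Fin (m + 1) → EuclideanSpace ℝ (Fin (m + 1)) → ℝ)
    (hF : ∀ i, ContDiff ℝ 1 (F i))
    (hsupp : ∀ i, HasCompactSupport (F i)) :
    ∫ x : EuclideanSpace ℝ (Fin (m + 1)),
      ∑ i, fderiv ℝ (F i) x (EuclideanSpace.basisFun (Fin (m + 1)) ℝ i) = 0 := by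
  classical
  set bE := EuclideanSpace.basisFun (Fin (m + 1)) ℝ with hbE
  have hK : IsCompact (⋃ i, tsupport (F i)) :=
    isCompact_iUnion (fun i => (hsupp i : IsCompact (tsupport (F i))))
  obtain ⟨r, hr⟩ := hK.isBounded.subset_closedBall 0
  set R := max r 0 + 1 with hR
  have hrR : r < R := by
    have := le_max_left r (0:ℝ); simp only [hR]; linarith
  have hRpos : 0 < R := by positivity
  have hout : ∀ (i) (x : EuclideanSpace ℝ (Fin (m + 1))), r < ‖x‖ → x ∉ tsupport (F i) := by
    intro i x hx hmem
    have := hr (mem_iUnion.2 ⟨i, hmem⟩)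
    simp only [Metric.mem_closedBall, dist_zero_right] at this
    linarith
  set eL := (EuclideanSpace.equiv (Fin (m + 1)) ℝ).symm with heL
  set G' : Fin (m + 1) → (Fin (m + 1) → ℝ) → (Fin (m + 1) → ℝ) →L[ℝ] ℝ :=
    fun i y => (fderiv ℝ (F i) (eL y)).comp
      (eL : (Fin (m + 1) → ℝ) →L[ℝ] EuclideanSpace ℝ (Fin (m + 1))) with hG'
  have heL_single : ∀ i : Fin (m + 1), eL (Pi.single i 1) = bE i := by
    intro i
    simp only [hbE, EuclideanSpace.basisFun_apply]
    rfl
  have hms : ∀ y : Fin (m + 1) → ℝ, (MeasurableEquiv.toLp 2 (Fin (m + 1) → ℝ)).symm.symm y = eL y :=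
    fun _ => rfl
  have hG'eval : ∀ (y : Fin (m + 1) → ℝ) i, G' i y (Pi.single i 1) = fderiv ℝ (F i) (eL y) (bE i) := by
    intro y i
    rw [hG']
    simp only [ContinuousLinearMap.comp_apply]
    congr 1
    exact heL_single i
  -- transfer the integral to the pi space
  have h1 : ∫ x : EuclideanSpace ℝ (Fin (m + 1)), ∑ i, fderiv ℝ (F i) x (bE i)
      = ∫ y : Fin (m + 1) → ℝ, ∑ i, G' i y (Pi.single i 1) := by
    rw [← MeasurePreserving.integral_comp
      (MeasurePreserving.symm _ (EuclideanSpace.volume_preserving_symm_measurableEquiv_toLp (Fin (m + 1))))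
      (MeasurableEquiv.toLp 2 (Fin (m + 1) → ℝ)).measurableEmbedding
      (fun x => ∑ i, fderiv ℝ (F i) x (bE i))]
    apply integral_congr_ae
    filter_upwards with y
    rw [hms y]
    exact Finset.sum_congr rfl fun i _ => (hG'eval y i).symm
  rw [h1]
  -- the integrand is continuous
  have hGcont : Continuous (fun y => ∑ i, G' i y (Pi.single i 1)) := by
    apply continuous_finset_sum
    intro i _
    have : (fun y => G' i y (Pi.single i 1)) = fun y => fderiv ℝ (F i) (eL y) (bE i) :=
      funext fun y => hG'eval y i
    rw [this]
    exact (ContinuousLinearMap.apply ℝ ℝ (bE i)).continuous.comp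
      (((hF i).continuous_fderiv one_ne_zero).comp eL.continuous)
  -- the integrand vanishes outside the box
  have hvanish : ∀ y : Fin (m + 1) → ℝ, y ∉ Icc (fun _ => -R) (fun _ => R) →
      ∑ i, G' i y (Pi.single i 1) = 0 := by
    intro y hy
    have hnorm : r < ‖eL y‖ := by
      simp only [Set.mem_Icc, Pi.le_def, not_and_or, not_forall, not_le] at hy
      have hex : ∃ j, R < |y j| := by
        rcases hy with hy | hy
        · obtain ⟨j, hj⟩ := hy
          exact ⟨j, lt_of_lt_of_le (by linarith) (neg_le_abs (y j))⟩
        · obtain ⟨j, hj⟩ := hy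
          exact ⟨j, lt_of_lt_of_le hj (le_abs_self _)⟩
      obtain ⟨j, hj⟩ := hex
      have h2 : |(eL y) j| ≤ ‖eL y‖ := abs_coord_le (eL y) j
      have h3 : (eL y) j = y j := rfl
      rw [h3] at h2
      linarith
    apply Finset.sum_eq_zero
    intro i _
    rw [hG'eval]
    have hfz : fderiv ℝ (F i) (eL y) = 0 := by
      by_contra hne
      exact hout i (eL y) hnorm (support_fderiv_subset ℝ (Function.mem_support.2 hne))
    rw [hfz]
    rfl
  rw [← setIntegral_eq_integral_of_forall_compl_eq_zero hvanish]
  -- apply the divergence theorem on the box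
  have hle : (fun _ : Fin (m + 1) => -R) ≤ (fun _ : Fin (m + 1) => R) := fun i => by
    simp only []; linarith
  have happ := integral_divergence_of_hasFDerivAt_off_countable'
    (fun _ : Fin (m + 1) => -R) (fun _ : Fin (m + 1) => R) hle
    (fun i y => F i (eL y)) G' ∅ countable_empty
    (fun i => ((hF i).continuous.comp eL.continuous).continuousOn)
    (fun y _ i => (((hF i).differentiable one_ne_zero (eL y)).hasFDerivAt).comp y eL.hasFDerivAt)
    ((hGcont.continuousOn).integrableOn_compact isCompact_Icc)
  rw [happ]
  apply Finset.sum_eq_zero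
  intro i _
  have hface : ∀ (c : ℝ), |c| = R → ∀ x : Fin m → ℝ, F i (eL (i.insertNth c x)) = 0 := by
    intro c hc x
    apply image_eq_zero_of_notMem_tsupport
    apply hout
    have e1 : |(eL (i.insertNth c x)) i| = R := by
      have e0 : (eL (i.insertNth c x)) i = (Fin.insertNth (α := fun _ => ℝ) i c x) i := rfl
      rw [e0, Fin.insertNth_apply_same, hc]
    calc r < R := hrR
      _ = |(eL (i.insertNth c x)) i| := e1.symm
      _ ≤ ‖eL (i.insertNth c x)‖ := abs_coord_le _ _
  rw [setIntegral_congr_fun measurableSet_Icc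
      (fun x _ => hface R (abs_of_pos hRpos) x),
    setIntegral_congr_fun measurableSet_Icc
      (fun x _ => hface (-R) (by rw [abs_neg, abs_of_pos hRpos]) x)]
  simp

variable {n : ℕ}

lemma fderiv_post {F G : Type*} [NormedAddCommGroup F] [NormedSpace ℝ F]
    [NormedAddCommGroup G] [NormedSpace ℝ G]
    (B : F →L[ℝ] G) {f : (EuclideanSpace ℝ (Fin n)) → F} {x : (EuclideanSpace ℝ (Fin n))} (hf : DifferentiableAt ℝ f x) :
    fderiv ℝ (fun y => B (f y)) x = B.comp (fderiv ℝ f x) :=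
  (B.hasFDerivAt.comp x hf.hasFDerivAt).fderiv

lemma contDiff_fderiv {F : Type*} [NormedAddCommGroup F] [NormedSpace ℝ F]
    {f : (EuclideanSpace ℝ (Fin n)) → F} (hf : ContDiff ℝ ∞ f) : ContDiff ℝ ∞ (fderiv ℝ f) :=
  hf.fderiv_right (by norm_num)

/-- Harmonicity of the directional derivative of a smooth harmonic function. -/
lemma harm_directional (u : (EuclideanSpace ℝ (Fin n)) → ℝ) (hu : ContDiff ℝ ∞ u)
    (hharm : ∀ x : (EuclideanSpace ℝ (Fin n)), ∑ i, fderiv ℝ (fderiv ℝ u) x (EuclideanSpace.basisFun (Fin n) ℝ i)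
      (EuclideanSpace.basisFun (Fin n) ℝ i) = 0)
    (v : (EuclideanSpace ℝ (Fin n))) :
    ∀ x : (EuclideanSpace ℝ (Fin n)), ∑ i, fderiv ℝ (fderiv ℝ (fun y => fderiv ℝ u y v)) x
      (EuclideanSpace.basisFun (Fin n) ℝ i) (EuclideanSpace.basisFun (Fin n) ℝ i) = 0 := by
  intro x
  set bE := EuclideanSpace.basisFun (Fin n) ℝ with hbE
  set f1 := fderiv ℝ u with hf1def
  set f2 := fderiv ℝ f1 with hf2def
  set f3 := fderiv ℝ f2 with hf3def
  have hf1 : ContDiff ℝ ∞ f1 := contDiff_fderiv hu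
  have hf2 : ContDiff ℝ ∞ f2 := contDiff_fderiv hf1
  have hd1 : ∀ y : (EuclideanSpace ℝ (Fin n)), DifferentiableAt ℝ f1 y := fun y => (hf1.differentiable (by norm_num)) y
  have hd2 : ∀ y : (EuclideanSpace ℝ (Fin n)), DifferentiableAt ℝ f2 y := fun y => (hf2.differentiable (by norm_num)) y
  set A : ((EuclideanSpace ℝ (Fin n)) →L[ℝ] ℝ) →L[ℝ] ℝ := ContinuousLinearMap.apply ℝ ℝ v with hA
  -- first derivative of w
  have hw1 : fderiv ℝ (fun y => f1 y v) = fun y => A.comp (f2 y) := by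
    funext y
    exact fderiv_post A (hd1 y)
  -- second derivative of w
  have hw2 : ∀ a c : (EuclideanSpace ℝ (Fin n)), fderiv ℝ (fderiv ℝ (fun y => f1 y v)) x a c = f3 x a c v := by
    intro a c
    rw [hw1]
    have : (fun y => A.comp (f2 y))
        = fun y => (ContinuousLinearMap.compL ℝ (EuclideanSpace ℝ (Fin n)) (EuclideanSpace ℝ (Fin n) →L[ℝ] ℝ) ℝ A) (f2 y) := rfl
    rw [this, fderiv_post (F := EuclideanSpace ℝ (Fin n) →L[ℝ] EuclideanSpace ℝ (Fin n) →L[ℝ] ℝ) _ (hd2 x)]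
    rfl
  -- swap first two slots of f3
  have sym12 : ∀ a c d : (EuclideanSpace ℝ (Fin n)), f3 x a c d = f3 x c a d := by
    intro a c d
    have h := (hf1.contDiffAt (x := x)).isSymmSndFDerivAt (by simp; exact WithTop.coe_le_coe.2 (le_top : (2:ℕ∞) ≤ ⊤)) a c
    rw [hf3def, hf2def]
    exact congrFun (congrArg _ h) d
  -- swap last two slots of f3
  have sym23 : ∀ a c d : (EuclideanSpace ℝ (Fin n)), f3 x a c d = f3 x a d c := by
    intro a c d
    set B : (EuclideanSpace ℝ (Fin n) →L[ℝ] (EuclideanSpace ℝ (Fin n) →L[ℝ] ℝ)) →L[ℝ] ℝ :=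
      (ContinuousLinearMap.apply ℝ ℝ d).comp
        (ContinuousLinearMap.apply ℝ (EuclideanSpace ℝ (Fin n) →L[ℝ] ℝ) c) -
      (ContinuousLinearMap.apply ℝ ℝ c).comp
        (ContinuousLinearMap.apply ℝ (EuclideanSpace ℝ (Fin n) →L[ℝ] ℝ) d) with hB
    have hzero : (fun y => B (f2 y)) = fun _ => (0 : ℝ) := by
      funext y
      have hsym := (hu.contDiffAt (x := y)).isSymmSndFDerivAt (by simp; exact WithTop.coe_le_coe.2 (le_top : (2:ℕ∞) ≤ ⊤)) c d
      show f2 y c d - f2 y d c = 0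
      rw [hf2def, hf1def]
      rw [hsym]
      ring
    have h1 : fderiv ℝ (fun y => B (f2 y)) x = B.comp (f3 x) := fderiv_post (F := EuclideanSpace ℝ (Fin n) →L[ℝ] EuclideanSpace ℝ (Fin n) →L[ℝ] ℝ) B (hd2 x)
    rw [hzero] at h1
    have h2 : (0 : EuclideanSpace ℝ (Fin n) →L[ℝ] ℝ) = B.comp (f3 x) := by
      rw [← h1]; simp
    have h3 := congrFun (congrArg DFunLike.coe h2) a
    change (0:ℝ) = f3 x a c d - f3 x a d c at h3
    linarith
  -- the Laplacian of u differentiated in direction v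
  have hlap : ∑ i, f3 x v (bE i) (bE i) = 0 := by
    set B : (EuclideanSpace ℝ (Fin n) →L[ℝ] (EuclideanSpace ℝ (Fin n) →L[ℝ] ℝ)) →L[ℝ] ℝ :=
      ∑ i, (ContinuousLinearMap.apply ℝ ℝ (bE i)).comp
        (ContinuousLinearMap.apply ℝ (EuclideanSpace ℝ (Fin n) →L[ℝ] ℝ) (bE i)) with hB
    have hBapp : ∀ C, B C = ∑ i, C (bE i) (bE i) := by
      intro C
      simp [hB, ContinuousLinearMap.sum_apply, ContinuousLinearMap.comp_apply,
        ContinuousLinearMap.apply_apply]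
    have hzero : (fun y => B (f2 y)) = fun _ => (0 : ℝ) := by
      funext y
      rw [hBapp]
      exact hharm y
    have h1 : fderiv ℝ (fun y => B (f2 y)) x = B.comp (f3 x) := fderiv_post (F := EuclideanSpace ℝ (Fin n) →L[ℝ] EuclideanSpace ℝ (Fin n) →L[ℝ] ℝ) B (hd2 x)
    rw [hzero] at h1
    have h2 : (0 : EuclideanSpace ℝ (Fin n) →L[ℝ] ℝ) = B.comp (f3 x) := by
      rw [← h1]; simp
    have h3 := congrFun (congrArg DFunLike.coe h2) v
    simp only [ContinuousLinearMap.zero_apply, ContinuousLinearMap.comp_apply] at h3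
    rw [hBapp] at h3
    linarith
  calc ∑ i, fderiv ℝ (fderiv ℝ (fun y => f1 y v)) x (bE i) (bE i)
      = ∑ i, f3 x v (bE i) (bE i) := by
        apply Finset.sum_congr rfl
        intro i _
        rw [hw2]
        rw [sym23 (bE i) (bE i) v, sym12 (bE i) v (bE i)]
    _ = 0 := hlap

/-- A smooth harmonic function in `L²` of Euclidean space (positive dimension) vanishes. -/
lemma harmonic_L2_eq_zero {m : ℕ} (w : EuclideanSpace ℝ (Fin (m + 1)) → ℝ)
    (hw : ContDiff ℝ ∞ w)
    (hharm : ∀ x, ∑ i, fderiv ℝ (fderiv ℝ w) x (EuclideanSpace.basisFun (Fin (m + 1)) ℝ i)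
      (EuclideanSpace.basisFun (Fin (m + 1)) ℝ i) = 0)
    (hL2 : MemLp w 2 volume) : ∀ x, w x = 0 := by
  classical
  set bE := EuclideanSpace.basisFun (Fin (m + 1)) ℝ with hbE
  obtain ⟨M, hM0, hM⟩ := cutP_deriv_bound
  have hwd : Differentiable ℝ w := hw.differentiable (by norm_num)
  -- the partial derivatives
  set g : Fin (m + 1) → EuclideanSpace ℝ (Fin (m + 1)) → ℝ :=
    fun i x => fderiv ℝ w x (bE i) with hg
  have hgsmooth : ∀ i, ContDiff ℝ ∞ (g i) := fun i =>
    (ContinuousLinearMap.apply ℝ ℝ (bE i)).contDiff.comp (contDiff_fderiv hw)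
  have hgd : ∀ i, Differentiable ℝ (g i) := fun i => (hgsmooth i).differentiable (by norm_num)
  have hf2d : ∀ y, DifferentiableAt ℝ (fderiv ℝ w) y :=
    fun y => ((contDiff_fderiv hw).differentiable (by norm_num)) y
  have hgderiv : ∀ i x a, fderiv ℝ (g i) x a = fderiv ℝ (fderiv ℝ w) x a (bE i) := by
    intro i x a
    show fderiv ℝ (fun y => (ContinuousLinearMap.apply ℝ ℝ (bE i)) (fderiv ℝ w y)) x a
      = fderiv ℝ (fderiv ℝ w) x a (bE i)
    rw [fderiv_post _ (hf2d x)]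
    rfl
  have hdivg : ∀ x, ∑ i, fderiv ℝ (g i) x (bE i) = 0 := by
    intro x
    rw [Finset.sum_congr rfl (fun i _ => hgderiv i x (bE i))]
    exact hharm x
  -- the squared gradient
  set S : EuclideanSpace ℝ (Fin (m + 1)) → ℝ := fun x => ∑ i, (g i x) ^ 2 with hS
  have hScont : Continuous S :=
    continuous_finset_sum _ (fun i _ => ((hgsmooth i).continuous.pow 2))
  have hSnonneg : ∀ x, 0 ≤ S x := fun x => Finset.sum_nonneg (fun i _ => sq_nonneg _)
  have hw2int : Integrable (fun x => (w x) ^ 2) volume := hL2.integrable_sq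
  have hw2nonneg : (0:ℝ) ≤ ∫ x, (w x) ^ 2 := integral_nonneg (fun x => sq_nonneg _)
  -- ======== main estimate ========
  have Est : ∀ R : ℝ, 0 < R → ∫ x in Metric.ball (0 : EuclideanSpace ℝ (Fin (m + 1))) R, S x
      ≤ 32 * M ^ 2 / R ^ 2 * ∫ x, (w x) ^ 2 := by
    intro R hR
    set η : EuclideanSpace ℝ (Fin (m + 1)) → ℝ := eta R with hη
    have hηsm : ContDiff ℝ ∞ η := eta_contDiff
    have hηd : Differentiable ℝ η := hηsm.differentiable (by norm_num)
    set Dη : Fin (m + 1) → EuclideanSpace ℝ (Fin (m + 1)) → ℝ :=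
      fun i x => fderiv ℝ η x (bE i) with hDη
    have hDηcont : ∀ i, Continuous (Dη i) := fun i =>
      (ContinuousLinearMap.apply ℝ ℝ (bE i)).continuous.comp
        (hηsm.continuous_fderiv (by norm_num))
    -- the vector field
    set F : Fin (m + 1) → EuclideanSpace ℝ (Fin (m + 1)) → ℝ :=
      fun i x => (η x * η x) * (w x * g i x) with hF
    have hFsmooth : ∀ i, ContDiff ℝ 1 (F i) :=
      fun i => (((hηsm.mul hηsm).mul (hw.mul (hgsmooth i))).of_le (by norm_num))
    have hFsupp : ∀ i, HasCompactSupport (F i) := by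
      intro i
      apply HasCompactSupport.intro (isCompact_closedBall (0 : EuclideanSpace ℝ (Fin (m+1))) (2*R))
      intro x hx
      simp only [Metric.mem_closedBall, dist_zero_right, not_le] at hx
      have h0 : η x = 0 := eta_zero hR hx.le
      show η x * η x * (w x * g i x) = 0
      rw [h0]
      ring
    -- the divergence of the vector field
    have hFderiv : ∀ i x, fderiv ℝ (F i) x (bE i)
        = (η x * η x) * (g i x * g i x) + (2 * η x * w x) * (g i x * Dη i x)
          + (η x * η x * w x) * fderiv ℝ (g i) x (bE i) := by
      intro i x
      have h1 : fderiv ℝ (fun y => η y * η y) x = η x • fderiv ℝ η x + η x • fderiv ℝ η x :=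
        fderiv_mul (hηd x) (hηd x)
      have h2 : fderiv ℝ (fun y => w y * g i y) x
          = w x • fderiv ℝ (g i) x + g i x • fderiv ℝ w x := fderiv_mul (hwd x) (hgd i x)
      have h3 : fderiv ℝ (F i) x = (η x * η x) • fderiv ℝ (fun y => w y * g i y) x
          + (w x * g i x) • fderiv ℝ (fun y => η y * η y) x :=
        fderiv_mul ((hηd x).mul (hηd x)) ((hwd x).mul (hgd i x))
      rw [h3, h2, h1]
      simp only [ContinuousLinearMap.add_apply, ContinuousLinearMap.coe_smul', Pi.smul_apply,
        smul_eq_mul]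
      have : fderiv ℝ w x (bE i) = g i x := rfl
      rw [this]
      have : fderiv ℝ η x (bE i) = Dη i x := rfl
      rw [this]
      ring
    have hdivsum : ∀ x, ∑ i, fderiv ℝ (F i) x (bE i)
        = (η x * η x) * S x + (2 * η x * w x) * (∑ i, g i x * Dη i x) := by
      intro x
      rw [Finset.sum_congr rfl (fun i _ => hFderiv i x), Finset.sum_add_distrib,
        Finset.sum_add_distrib]
      have e1 : ∑ i, η x * η x * w x * fderiv ℝ (g i) x (bE i) = 0 := by
        rw [← Finset.mul_sum, hdivg x, mul_zero]
      have e2 : ∑ i, 2 * η x * w x * (g i x * Dη i x)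
          = 2 * η x * w x * ∑ i, g i x * Dη i x := by
        rw [Finset.mul_sum]
      have e3 : ∑ i, η x * η x * (g i x * g i x) = η x * η x * S x := by
        show _ = η x * η x * ∑ i, (g i x) ^ 2
        rw [Finset.mul_sum]
        exact Finset.sum_congr rfl (fun i _ => by ring)
      rw [e1, e2, e3, add_zero]
    -- integrability of the pieces
    have hsupport_eta : ∀ (f : EuclideanSpace ℝ (Fin (m+1)) → ℝ),
        (∀ x, η x = 0 → f x = 0) → HasCompactSupport f := by
      intro f hf
      apply HasCompactSupport.intro (isCompact_closedBall (0 : EuclideanSpace ℝ (Fin (m+1))) (2*R))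
      intro x hx
      simp only [Metric.mem_closedBall, dist_zero_right, not_le] at hx
      exact hf x (eta_zero hR hx.le)
    set A : EuclideanSpace ℝ (Fin (m + 1)) → ℝ := fun x => (η x * η x) * S x with hA
    set Bd : EuclideanSpace ℝ (Fin (m + 1)) → ℝ :=
      fun x => (2 * η x * w x) * (∑ i, g i x * Dη i x) with hBd
    have hAcont : Continuous A := ((hηsm.continuous.mul hηsm.continuous).mul hScont)
    have hBdcont : Continuous Bd := by
      apply Continuous.mul
      · exact (continuous_const.mul hηsm.continuous).mul hw.continuous
      · exact continuous_finset_sum _ (fun i _ => (hgsmooth i).continuous.mul (hDηcont i))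
    have hAint : Integrable A volume :=
      hAcont.integrable_of_hasCompactSupport
        (hsupport_eta A (fun x hx => by rw [hA]; simp [hx]))
    have hBdint : Integrable Bd volume :=
      hBdcont.integrable_of_hasCompactSupport
        (hsupport_eta Bd (fun x hx => by rw [hBd]; simp [hx]))
    -- h = squared gradient of η
    set hgr : EuclideanSpace ℝ (Fin (m + 1)) → ℝ := fun x => ∑ i, (Dη i x) ^ 2 with hhgr
    have hgrcont : Continuous hgr := continuous_finset_sum _ (fun i _ => (hDηcont i).pow 2)
    have hgrnonneg : ∀ x, 0 ≤ hgr x := fun x => Finset.sum_nonneg (fun i _ => sq_nonneg _)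
    have hgrbound : ∀ x, hgr x ≤ 8 * M ^ 2 / R ^ 2 := fun x => eta_grad_sq_bound hR hM0 hM x
    have hw2hint : Integrable (fun x => (w x) ^ 2 * hgr x) volume := by
      apply Integrable.mono' (hw2int.const_mul (8 * M ^ 2 / R ^ 2))
      · exact ((hw.continuous.pow 2).mul hgrcont).aestronglyMeasurable
      · filter_upwards with x
        rw [Real.norm_eq_abs, abs_of_nonneg (mul_nonneg (sq_nonneg _) (hgrnonneg x))]
        calc (w x) ^ 2 * hgr x ≤ (w x) ^ 2 * (8 * M ^ 2 / R ^ 2) :=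
              mul_le_mul_of_nonneg_left (hgrbound x) (sq_nonneg _)
          _ = 8 * M ^ 2 / R ^ 2 * (w x) ^ 2 := by ring
    -- divergence theorem
    have hdiv0 : ∫ x, (A x + Bd x) = 0 := by
      rw [← divergence_integral_zero F hFsmooth hFsupp]
      apply integral_congr_ae
      filter_upwards with x
      rw [hdivsum x]
    have hintAB : ∫ x, A x = - ∫ x, Bd x := by
      rw [integral_add hAint hBdint] at hdiv0
      linarith
    -- pointwise bound on Bd
    have hBdbound : ∀ x, - Bd x ≤ (1/2 : ℝ) * A x + 2 * ((w x) ^ 2 * hgr x) := by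
      intro x
      have hCS : (∑ i, g i x * Dη i x) ^ 2 ≤ S x * hgr x := by
        exact Finset.sum_mul_sq_le_sq_mul_sq Finset.univ _ _
      set T := ∑ i, g i x * Dη i x
      have hη0 := eta_nonneg (R := R) x
      have hS0 := hSnonneg x
      have hh0 := hgrnonneg x
      rw [hA, hBd]
      nlinarith [sq_nonneg (η x * η x * S x - 4 * (w x)^2 * hgr x), sq_nonneg (2 * η x * w x * T),
        mul_nonneg (mul_nonneg hη0 hη0) hS0, mul_nonneg (sq_nonneg (w x)) hh0,
        sq_nonneg (η x * w x), mul_nonneg (mul_nonneg (mul_nonneg hη0 hη0) (sq_nonneg (w x))) (mul_nonneg hS0 hh0),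
        sq_nonneg (2 * η x * w x * T + (1/2) * (η x * η x * S x) + 2 * ((w x)^2 * hgr x))]
    -- combine
    have hAbound : ∫ x, A x ≤ 4 * ∫ x, (w x) ^ 2 * hgr x := by
      have h1 : ∫ x, A x ≤ ∫ x, ((1/2 : ℝ) * A x + 2 * ((w x) ^ 2 * hgr x)) := by
        rw [hintAB]
        rw [← integral_neg]
        apply integral_mono (hBdint.neg) ((hAint.const_mul _).add (hw2hint.const_mul _))
        intro x
        exact hBdbound x
      rw [integral_add (hAint.const_mul _) (hw2hint.const_mul _), integral_const_mul,
        integral_const_mul] at h1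
      linarith
    have hfinal : ∫ x, A x ≤ 32 * M ^ 2 / R ^ 2 * ∫ x, (w x) ^ 2 := by
      have h2 : ∫ x, (w x) ^ 2 * hgr x ≤ ∫ x, 8 * M ^ 2 / R ^ 2 * (w x) ^ 2 := by
        apply integral_mono hw2hint (hw2int.const_mul _)
        intro x
        calc (w x) ^ 2 * hgr x ≤ (w x) ^ 2 * (8 * M ^ 2 / R ^ 2) :=
              mul_le_mul_of_nonneg_left (hgrbound x) (sq_nonneg _)
          _ = 8 * M ^ 2 / R ^ 2 * (w x) ^ 2 := by ring
      rw [integral_const_mul] at h2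
      calc ∫ x, A x ≤ 4 * ∫ x, (w x) ^ 2 * hgr x := hAbound
        _ ≤ 4 * (8 * M ^ 2 / R ^ 2 * ∫ x, (w x) ^ 2) := by linarith
        _ = 32 * M ^ 2 / R ^ 2 * ∫ x, (w x) ^ 2 := by ring
    -- restrict to the ball
    have hball : ∫ x in Metric.ball (0 : EuclideanSpace ℝ (Fin (m + 1))) R, S x = ∫ x in Metric.ball (0 : EuclideanSpace ℝ (Fin (m + 1))) R, A x := by
      apply setIntegral_congr_fun measurableSet_ball
      intro x hx
      simp only [Metric.mem_ball, dist_zero_right] at hx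
      rw [hA]
      simp only [hη, eta_one hR hx.le, one_mul]
    rw [hball]
    calc ∫ x in Metric.ball (0 : EuclideanSpace ℝ (Fin (m + 1))) R, A x
        ≤ ∫ x, A x := setIntegral_le_integral hAint
          (by filter_upwards with x; exact mul_nonneg (mul_nonneg (eta_nonneg x) (eta_nonneg x)) (hSnonneg x))
      _ ≤ 32 * M ^ 2 / R ^ 2 * ∫ x, (w x) ^ 2 := hfinal
  -- ======== conclude S = 0 ========
  have SintOn : ∀ r : ℝ, IntegrableOn S (Metric.ball (0 : EuclideanSpace ℝ (Fin (m+1))) r) volume :=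
    fun r => (hScont.continuousOn.integrableOn_compact (isCompact_closedBall _ r)).mono_set
      Metric.ball_subset_closedBall
  have hSzero : ∀ x, S x = 0 := by
    intro x₀
    by_contra hne
    have hpos : 0 < S x₀ := lt_of_le_of_ne (hSnonneg x₀) (Ne.symm hne)
    set r : ℝ := ‖x₀‖ + 1 with hrdef
    have hr : (0:ℝ) < r := by positivity
    -- the integral over the ball of radius r vanishes
    have hint0 : ∫ x in Metric.ball (0 : EuclideanSpace ℝ (Fin (m+1))) r, S x = 0 := by
      refine le_antisymm ?_ (setIntegral_nonneg measurableSet_ball (fun x _ => hSnonneg x))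
      have hmono : ∀ R : ℝ, r ≤ R →
          ∫ x in Metric.ball (0 : EuclideanSpace ℝ (Fin (m+1))) r, S x
            ≤ 32 * M ^ 2 / R ^ 2 * ∫ x, (w x) ^ 2 := by
        intro R hrR
        refine le_trans ?_ (Est R (lt_of_lt_of_le hr hrR))
        exact setIntegral_mono_set (SintOn R) (Filter.Eventually.of_forall hSnonneg)
          (HasSubset.Subset.eventuallyLE (Metric.ball_subset_ball hrR))
      have htend : Tendsto (fun R : ℝ => 32 * M ^ 2 / R ^ 2 * ∫ x, (w x) ^ 2) atTop (𝓝 0) := by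
        have h1 : Tendsto (fun R : ℝ => R ^ 2) atTop atTop := tendsto_pow_atTop two_ne_zero
        have h2 : Tendsto (fun R : ℝ => (32 * M ^ 2 * ∫ x, (w x) ^ 2) / R ^ 2) atTop (𝓝 0) :=
          Tendsto.div_atTop tendsto_const_nhds h1
        refine h2.congr (fun R => ?_)
        ring
      exact ge_of_tendsto htend ((eventually_ge_atTop r).mono (fun R hR => hmono R hR))
    -- but the integral is bounded below by a positive quantity
    have hev : ∀ᶠ y in nhds x₀, S x₀ / 2 < S y :=
      (hScont.continuousAt).eventually (eventually_gt_nhds (by linarith : S x₀ / 2 < S x₀))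
    obtain ⟨ε, hε, hballS⟩ := Metric.eventually_nhds_iff.1 hev
    set δ : ℝ := min (ε / 2) 1 with hδdef
    have hδ : 0 < δ := lt_min (by linarith) one_pos
    have hsub : Metric.ball x₀ δ ⊆ Metric.ball (0 : EuclideanSpace ℝ (Fin (m+1))) r := by
      intro y hy
      simp only [Metric.mem_ball, dist_zero_right] at hy ⊢
      have h1 : dist y x₀ < 1 := lt_of_lt_of_le hy (min_le_right _ _)
      have h2 : ‖y‖ ≤ ‖y - x₀‖ + ‖x₀‖ := by simpa using norm_add_le (y - x₀) x₀
      rw [dist_eq_norm] at h1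
      rw [hrdef]
      linarith
    have hlow : S x₀ / 2 * (volume (Metric.ball x₀ δ)).toReal ≤ ∫ x in Metric.ball x₀ δ, S x := by
      apply setIntegral_ge_of_const_le_real measurableSet_ball measure_ball_lt_top.ne
      · intro y hy
        have hd : dist y x₀ < ε :=
          lt_of_lt_of_le (Metric.mem_ball.1 hy) (le_trans (min_le_left _ _) (by linarith))
        exact (hballS hd).le
      · exact (SintOn r).mono_set hsub
    have hup : ∫ x in Metric.ball x₀ δ, S x
        ≤ ∫ x in Metric.ball (0 : EuclideanSpace ℝ (Fin (m+1))) r, S x :=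
      setIntegral_mono_set (SintOn r) (Filter.Eventually.of_forall hSnonneg)
        (HasSubset.Subset.eventuallyLE hsub)
    have hvpos : 0 < (volume (Metric.ball x₀ δ)).toReal :=
      ENNReal.toReal_pos (Metric.measure_ball_pos volume x₀ hδ).ne' measure_ball_lt_top.ne
    nlinarith [hint0, hlow, hup, hpos, hvpos]
  -- gradient of w vanishes
  have hgz : ∀ x, fderiv ℝ w x = 0 := by
    intro x
    have h0 : ∀ i, g i x = 0 := by
      intro i
      have hterm : (g i x) ^ 2 = 0 :=
        (Finset.sum_eq_zero_iff_of_nonneg (fun j _ => sq_nonneg (g j x))).1 (hSzero x) i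
          (Finset.mem_univ i)
      exact sq_eq_zero_iff.mp hterm
    have hcoe : (fderiv ℝ w x : EuclideanSpace ℝ (Fin (m+1)) →ₗ[ℝ] ℝ)
        = ((0 : EuclideanSpace ℝ (Fin (m+1)) →L[ℝ] ℝ) : EuclideanSpace ℝ (Fin (m+1)) →ₗ[ℝ] ℝ) := by
      apply Module.Basis.ext bE.toBasis
      intro i
      simp only [ContinuousLinearMap.coe_coe, OrthonormalBasis.coe_toBasis,
        ContinuousLinearMap.coe_zero, LinearMap.zero_apply]
      exact h0 i
    exact ContinuousLinearMap.coe_injective hcoe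
  -- hence w is constant, and being L², zero
  have hconst := is_const_of_fderiv_eq_zero (𝕜 := ℝ) hwd hgz
  have hwc : w = fun _ => w 0 := funext (fun x => hconst x 0)
  haveI : Nontrivial (EuclideanSpace ℝ (Fin (m+1))) := by
    refine ⟨⟨EuclideanSpace.single 0 1, 0, fun h => ?_⟩⟩
    have := congrArg norm h
    rw [EuclideanSpace.norm_single, norm_zero, norm_one] at this
    exact one_ne_zero this
  have hvol : (volume : Measure (EuclideanSpace ℝ (Fin (m+1)))) univ = ⊤ :=
    measure_univ_of_isAddLeftInvariant volume
  rw [hwc] at hL2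
  rcases (memLp_const_iff (p := 2) two_ne_zero ENNReal.ofNat_ne_top).1 hL2 with hc | hvollt
  · intro x
    rw [hwc]
    exact hc
  · rw [hvol] at hvollt
    exact absurd hvollt (by simp)

/-- A smooth harmonic function on Euclidean space `ℝ^n` with square-integrable gradient is
constant: its total derivative vanishes identically. -/
theorem harmonic_gradient_memLp_two_eq_const
    (n : ℕ) (hn : 1 ≤ n)
    (u : EuclideanSpace ℝ (Fin n) → ℝ)
    (hsmooth : ContDiff ℝ (⊤ : ℕ∞) u)
    (hharm : ∀ (x : EuclideanSpace ℝ (Fin n))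
      (b : OrthonormalBasis (Fin n) ℝ (EuclideanSpace ℝ (Fin n))),
      ∑ i, fderiv ℝ (fderiv ℝ u) x (b i) (b i) = 0)
    (hL2 : MemLp (fun x => ‖fderiv ℝ u x‖) 2 volume) :
    ∀ x, fderiv ℝ u x = 0 := by
  obtain ⟨m, rfl⟩ : ∃ m, n = m + 1 := ⟨n - 1, (Nat.succ_pred_eq_of_pos hn).symm⟩
  have husm : ContDiff ℝ ∞ u := hsmooth.of_le (by simp)
  have hharm' : ∀ x, ∑ i, fderiv ℝ (fderiv ℝ u) x (EuclideanSpace.basisFun (Fin (m + 1)) ℝ i)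
      (EuclideanSpace.basisFun (Fin (m + 1)) ℝ i) = 0 :=
    fun x => hharm x (EuclideanSpace.basisFun (Fin (m + 1)) ℝ)
  have hv : ∀ v : EuclideanSpace ℝ (Fin (m + 1)), ∀ y, fderiv ℝ u y v = 0 := by
    intro v
    apply harmonic_L2_eq_zero (fun y => fderiv ℝ u y v)
    · exact (ContinuousLinearMap.apply ℝ ℝ v).contDiff.comp (contDiff_fderiv husm)
    · exact harm_directional u husm hharm' v
    · apply MemLp.of_le_mul (c := ‖v‖) hL2
      · exact ((ContinuousLinearMap.apply ℝ ℝ v).continuous.comp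
          ((contDiff_fderiv husm).continuous)).aestronglyMeasurable
      · filter_upwards with y
        rw [Real.norm_eq_abs, Real.norm_eq_abs, abs_of_nonneg (norm_nonneg _)]
        calc |fderiv ℝ u y v| ≤ ‖fderiv ℝ u y‖ * ‖v‖ := by
              simpa [Real.norm_eq_abs] using (fderiv ℝ u y).le_opNorm v
          _ = ‖v‖ * ‖fderiv ℝ u y‖ := mul_comm _ _
  intro x
  ext v
  simpa using hv v x
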